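/- Let γ = (c_1,…,c_n) be a clan of signature (p,q) with opposite signs at positions i < j (that is, {c_i, c_j} = {+,−}), and let γ′ be the clan of signature (p,q) obtained from γ by replacing c_i and c_j by a pair of equal numbers not occurring in γ. Then D(γ′) = D(γ) + (j − i) − #{pairs (s,t) of γ with s < i < t < j} − #{pairs (s,t) of γ with i < s < j < t}, and in particular D(γ′) ≥ D(γ) + 1. (This is the move that replaces a pair of opposite signs by a pair of equal numbers, which makes the corresponding orbit strictly larger.) -/
import Mathlib


/-- An entry of a clan: a plus sign, a minus sign, or a natural number. -/
inductive CEntry : Type where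
  | plus : CEntry
  | minus : CEntry
  | num : ℕ → CEntry
deriving DecidableEq

/-- Whether an entry is a natural number. -/
def CEntry.isNum : CEntry → Bool
  | .num _ => true
  | _ => false

/-- Whether an entry is a sign (`+` or `−`). -/
def CEntry.isSign : CEntry → Bool
  | .num _ => false
  | _ => true

/-- A clan of signature `(p, q)`: a sequence of `n = p + q` symbols, each `+`, `−`, or a
natural number, such that every natural number occurring in the sequence occurs exactly
twice, and the number of `+` entries plus the number of pairs of equal numbers is `p`. -/
structure Clan (n p q : ℕ) : Type where
  c : Fin n → CEntry
  total : n = p + q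
  twice : ∀ a : ℕ, (Finset.univ.filter fun i => c i = CEntry.num a).card = 0 ∨
      (Finset.univ.filter fun i => c i = CEntry.num a).card = 2
  signature : (Finset.univ.filter fun i => c i = CEntry.plus).card
      + (Finset.univ.filter fun i => (c i).isNum = true).card / 2 = p

namespace Clan

variable {n p q : ℕ}

/-- `(i, j)` is a pair of the clan `γ`: `i < j` and `c i = c j` is a natural number. -/
def IsPair (γ : Clan n p q) (i j : Fin n) : Prop :=
  i < j ∧ γ.c i = γ.c j ∧ (γ.c i).isNum = true

instance (γ : Clan n p q) (i j : Fin n) : Decidable (γ.IsPair i j) := by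
  unfold IsPair; infer_instance

/-- The finset of all pairs of the clan `γ`. -/
def pairs (γ : Clan n p q) : Finset (Fin n × Fin n) :=
  Finset.univ.filter fun x => γ.IsPair x.1 x.2

/-- The contribution `j − i − #{pairs (s,t) of γ with s < i < t < j}` of a pair `(i, j)`
to the dimension of the orbit parametrized by `γ`. -/
def summand (γ : Clan n p q) (x : Fin n × Fin n) : ℕ :=
  (x.2 : ℕ) - (x.1 : ℕ) -
    (γ.pairs.filter fun y => y.1 < x.1 ∧ x.1 < y.2 ∧ y.2 < x.2).card

/-- `d_{p,q} = (p(p−1) + q(q−1))/2`, the dimension of the closed orbits. -/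
def dpq (p q : ℕ) : ℕ := (p * (p - 1) + q * (q - 1)) / 2

/-- The dimension of the `GL_p × GL_q`-orbit on the flag variety parametrized by `γ`. -/
def D (γ : Clan n p q) : ℕ := dpq p q + ∑ x ∈ γ.pairs, γ.summand x

/-- `γ` includes the pattern `(1, +, −, 1)`. -/
def Includes1pm1 (γ : Clan n p q) : Prop :=
  ∃ i k l j : Fin n, i < k ∧ k < l ∧ l < j ∧
    γ.c k = CEntry.plus ∧ γ.c l = CEntry.minus ∧ γ.IsPair i j

/-- `γ` includes the pattern `(1, −, +, 1)`. -/
def Includes1mp1 (γ : Clan n p q) : Prop :=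
  ∃ i k l j : Fin n, i < k ∧ k < l ∧ l < j ∧
    γ.c k = CEntry.minus ∧ γ.c l = CEntry.plus ∧ γ.IsPair i j

/-- `γ` includes the pattern `(1, 2, 1, 2)`. -/
def Includes1212 (γ : Clan n p q) : Prop :=
  ∃ i s j t : Fin n, i < s ∧ s < j ∧ j < t ∧
    γ.IsPair i j ∧ γ.IsPair s t ∧ γ.c i ≠ γ.c s

/-- `γ` includes the pattern `(1, +, 2, 2, 1)`. -/
def Includes1p221 (γ : Clan n p q) : Prop :=
  ∃ i k s t j : Fin n, i < k ∧ k < s ∧ s < t ∧ t < j ∧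
    γ.c k = CEntry.plus ∧ γ.IsPair i j ∧ γ.IsPair s t ∧ γ.c i ≠ γ.c s

/-- `γ` includes the pattern `(1, −, 2, 2, 1)`. -/
def Includes1m221 (γ : Clan n p q) : Prop :=
  ∃ i k s t j : Fin n, i < k ∧ k < s ∧ s < t ∧ t < j ∧
    γ.c k = CEntry.minus ∧ γ.IsPair i j ∧ γ.IsPair s t ∧ γ.c i ≠ γ.c s

/-- `γ` includes the pattern `(1, 2, 2, +, 1)`. -/
def Includes122p1 (γ : Clan n p q) : Prop :=
  ∃ i s t k j : Fin n, i < s ∧ s < t ∧ t < k ∧ k < j ∧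
    γ.c k = CEntry.plus ∧ γ.IsPair i j ∧ γ.IsPair s t ∧ γ.c i ≠ γ.c s

/-- `γ` includes the pattern `(1, 2, 2, −, 1)`. -/
def Includes122m1 (γ : Clan n p q) : Prop :=
  ∃ i s t k j : Fin n, i < s ∧ s < t ∧ t < k ∧ k < j ∧
    γ.c k = CEntry.minus ∧ γ.IsPair i j ∧ γ.IsPair s t ∧ γ.c i ≠ γ.c s

/-- `γ` avoids the seven patterns `(1,+,−,1)`, `(1,−,+,1)`, `(1,2,1,2)`, `(1,+,2,2,1)`,
`(1,−,2,2,1)`, `(1,2,2,+,1)`, `(1,2,2,−,1)`. -/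
def AvoidsSeven (γ : Clan n p q) : Prop :=
  ¬ γ.Includes1pm1 ∧ ¬ γ.Includes1mp1 ∧ ¬ γ.Includes1212 ∧
    ¬ γ.Includes1p221 ∧ ¬ γ.Includes1m221 ∧ ¬ γ.Includes122p1 ∧ ¬ γ.Includes122m1

end Clan

namespace Clan
variable {n p q : ℕ}

lemma three_num (γ : Clan n p q) {s t u : Fin n} {a : ℕ}
    (hst : s ≠ t) (hsu : s ≠ u) (htu : t ≠ u)
    (hs : γ.c s = CEntry.num a) (ht : γ.c t = CEntry.num a)
    (hu : γ.c u = CEntry.num a) : False := by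
  have h2 := γ.twice a
  have hsub : ({s, t, u} : Finset (Fin n)) ⊆
      Finset.univ.filter fun i => γ.c i = CEntry.num a := by
    intro x hx
    simp only [Finset.mem_insert, Finset.mem_singleton] at hx
    simp only [Finset.mem_filter, Finset.mem_univ, true_and]
    rcases hx with rfl | rfl | rfl <;> assumption
  have h3 : ({s, t, u} : Finset (Fin n)).card = 3 := by
    rw [Finset.card_insert_of_notMem (by simp [hst, hsu]),
      Finset.card_insert_of_notMem (by simp [htu]), Finset.card_singleton]
  have hle := Finset.card_le_card hsub
  omega

lemma isPair_num {γ : Clan n p q} {s t : Fin n} (h : γ.IsPair s t) :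
    ∃ a, γ.c s = CEntry.num a ∧ γ.c t = CEntry.num a := by
  obtain ⟨-, heq, hnum⟩ := h
  cases hcs : γ.c s with
  | num a => exact ⟨a, rfl, by rw [← heq, hcs]⟩
  | plus => rw [hcs] at hnum; simp [CEntry.isNum] at hnum
  | minus => rw [hcs] at hnum; simp [CEntry.isNum] at hnum

lemma pair_right_unique {γ : Clan n p q} {s s' t : Fin n}
    (h : γ.IsPair s t) (h' : γ.IsPair s' t) : s = s' := by
  by_contra hne
  obtain ⟨a, hs, ht⟩ := isPair_num h
  obtain ⟨a', hs', ht'⟩ := isPair_num h'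
  have haa : a' = a := by rw [ht] at ht'; injection ht' with h0; omega
  subst haa
  exact three_num γ hne (ne_of_lt h.1) (ne_of_lt h'.1) hs hs' ht

lemma pair_left_unique {γ : Clan n p q} {s t t' : Fin n}
    (h : γ.IsPair s t) (h' : γ.IsPair s t') : t = t' := by
  by_contra hne
  obtain ⟨a, hs, ht⟩ := isPair_num h
  obtain ⟨a', hs', ht'⟩ := isPair_num h'
  have haa : a' = a := by rw [hs] at hs'; injection hs' with h0; omega
  subst haa
  exact three_num γ hne (ne_of_gt h.1) (ne_of_gt h'.1) ht ht' hs

lemma pair_chain {γ : Clan n p q} {s t u : Fin n}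
    (h : γ.IsPair s t) (h' : γ.IsPair t u) : False := by
  obtain ⟨a, hs, ht⟩ := isPair_num h
  obtain ⟨a', ht', hu⟩ := isPair_num h'
  have haa : a' = a := by rw [ht] at ht'; injection ht' with h0; omega
  subst haa
  exact three_num γ (ne_of_lt h.1) (ne_of_lt (h.1.trans h'.1)) (ne_of_lt h'.1) hs ht hu

lemma mem_pairs {γ : Clan n p q} {y : Fin n × Fin n} :
    y ∈ γ.pairs ↔ γ.IsPair y.1 y.2 := by
  simp [pairs]

end Clan

/-- The move replacing a pair of opposite signs of `γ` in positions `i < j` by a pair of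
equal numbers not occurring in `γ`, yielding `γ'`. -/
def ReplaceMove {n p q : ℕ} (γ γ' : Clan n p q) : Prop :=
  ∃ i j : Fin n, i < j ∧
    ((γ.c i = CEntry.plus ∧ γ.c j = CEntry.minus) ∨
      (γ.c i = CEntry.minus ∧ γ.c j = CEntry.plus)) ∧
    (∃ a : ℕ, (∀ k, γ.c k ≠ CEntry.num a) ∧
      γ'.c i = CEntry.num a ∧ γ'.c j = CEntry.num a) ∧
    ∀ k, k ≠ i → k ≠ j → γ'.c k = γ.c k

/-- Replacing a pair of opposite signs in positions `i < j` by a pair of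
equal numbers not occurring in `γ` changes the dimension by
`(j − i) − #{pairs (s,t) : s < i < t < j} − #{pairs (s,t) : i < s < j < t}`,
and in particular increases it by at least `1`. -/
theorem dim_replace_opposite_signs {n p q : ℕ} (γ γ' : Clan n p q) (i j : Fin n)
    (hij : i < j)
    (hsigns : (γ.c i = CEntry.plus ∧ γ.c j = CEntry.minus) ∨
      (γ.c i = CEntry.minus ∧ γ.c j = CEntry.plus))
    (a : ℕ) (ha : ∀ k, γ.c k ≠ CEntry.num a)
    (h'i : γ'.c i = CEntry.num a) (h'j : γ'.c j = CEntry.num a)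
    (hrest : ∀ k, k ≠ i → k ≠ j → γ'.c k = γ.c k) :
    γ'.D + (γ.pairs.filter fun y => y.1 < i ∧ i < y.2 ∧ y.2 < j).card
         + (γ.pairs.filter fun y => i < y.1 ∧ y.1 < j ∧ j < y.2).card
      = γ.D + ((j : ℕ) - (i : ℕ)) ∧
    γ.D + 1 ≤ γ'.D := by
  classical
  have hiSign : (γ.c i).isNum = false := by
    rcases hsigns with ⟨h, _⟩ | ⟨h, _⟩ <;> simp [h, CEntry.isNum]
  have hjSign : (γ.c j).isNum = false := by
    rcases hsigns with ⟨_, h⟩ | ⟨_, h⟩ <;> simp [h, CEntry.isNum]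
  have hnum' : ∀ k : Fin n, (γ.c k).isNum = true → k ≠ i ∧ k ≠ j := by
    intro k hk
    constructor <;> rintro rfl
    · rw [hiSign] at hk; exact Bool.noConfusion hk
    · rw [hjSign] at hk; exact Bool.noConfusion hk
  have hijnotmem : (i, j) ∉ γ.pairs := by
    intro h
    have hp := Clan.mem_pairs.1 h
    obtain ⟨b, hb, -⟩ := Clan.isPair_num hp
    rw [hb] at hiSign
    exact Bool.noConfusion hiSign
  -- the pairs of γ' are the pairs of γ together with (i, j)
  have hP' : γ'.pairs = insert (i, j) γ.pairs := by
    ext y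
    rw [Finset.mem_insert, Clan.mem_pairs, Clan.mem_pairs]
    constructor
    · rintro ⟨hlt, heq, hnum⟩
      by_cases h1 : y.1 = i
      · by_cases h2 : y.2 = j
        · exact Or.inl (Prod.ext h1 h2)
        · exfalso
          have hi2 : i < y.2 := by rw [← h1]; exact hlt
          have hc2 := hrest y.2 hi2.ne' h2
          rw [h1, h'i] at heq
          exact ha y.2 (by rw [← hc2, ← heq])
      · by_cases h1j : y.1 = j
        · exfalso
          have hj2 : j < y.2 := by rw [← h1j]; exact hlt
          have hc2 := hrest y.2 (hij.trans hj2).ne' hj2.ne'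
          rw [h1j, h'j] at heq
          exact ha y.2 (by rw [← hc2, ← heq])
        · have hc1 := hrest y.1 h1 h1j
          by_cases h2 : y.2 = i
          · exfalso
            rw [h2, h'i] at heq
            exact ha y.1 (by rw [← hc1, heq])
          · by_cases h2j : y.2 = j
            · exfalso
              rw [h2j, h'j] at heq
              exact ha y.1 (by rw [← hc1, heq])
            · have hc2 := hrest y.2 h2 h2j
              exact Or.inr ⟨hlt, by rw [← hc1, ← hc2]; exact heq,
                by rw [← hc1]; exact hnum⟩
    · rintro (rfl | ⟨hlt, heq, hnum⟩)
      · exact ⟨hij, by rw [h'i, h'j], by rw [h'i]; rfl⟩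
      · have hk1 := hnum' y.1 hnum
        have hk2 := hnum' y.2 (by rw [← heq]; exact hnum)
        have hc1 := hrest y.1 hk1.1 hk1.2
        have hc2 := hrest y.2 hk2.1 hk2.2
        exact ⟨hlt, by rw [hc1, hc2]; exact heq, by rw [hc1]; exact hnum⟩
  set A := γ.pairs.filter fun y => y.1 < i ∧ i < y.2 ∧ y.2 < j with hAdef
  set B := γ.pairs.filter fun y => i < y.1 ∧ y.1 < j ∧ j < y.2 with hBdef
  -- A and B are disjoint and inject into Ioo i j
  have hdisj : Disjoint A B := by
    rw [Finset.disjoint_left]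
    intro y hyA hyB
    rw [hAdef, Finset.mem_filter] at hyA
    rw [hBdef, Finset.mem_filter] at hyB
    exact absurd hyB.2.1 (not_lt.2 hyA.2.1.le)
  have hmapsto : ∀ y ∈ A ∪ B, (if y.2 < j then y.2 else y.1) ∈ Finset.Ioo i j := by
    intro y hy
    rcases Finset.mem_union.1 hy with hyA | hyB
    · rw [hAdef, Finset.mem_filter] at hyA
      rw [if_pos hyA.2.2.2, Finset.mem_Ioo]
      exact ⟨hyA.2.2.1, hyA.2.2.2⟩
    · rw [hBdef, Finset.mem_filter] at hyB
      rw [if_neg (not_lt.2 hyB.2.2.2.le), Finset.mem_Ioo]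
      exact ⟨hyB.2.1, hyB.2.2.1⟩
  have hinj : Set.InjOn (fun y : Fin n × Fin n => if y.2 < j then y.2 else y.1)
      ((A ∪ B : Finset (Fin n × Fin n)) : Set (Fin n × Fin n)) := by
    intro y hy y' hy' hf
    simp only at hf
    rcases Finset.mem_union.1 (Finset.mem_coe.1 hy) with h1 | h1 <;>
      rcases Finset.mem_union.1 (Finset.mem_coe.1 hy') with h2 | h2
    · rw [hAdef, Finset.mem_filter] at h1 h2
      rw [if_pos h1.2.2.2, if_pos h2.2.2.2] at hf
      have p1 := Clan.mem_pairs.1 h1.1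
      have p2 := Clan.mem_pairs.1 h2.1
      have p1' : γ.IsPair y.1 y'.2 := by rw [← hf]; exact p1
      exact Prod.ext (Clan.pair_right_unique p1' p2) hf
    · rw [hAdef, Finset.mem_filter] at h1
      rw [hBdef, Finset.mem_filter] at h2
      rw [if_pos h1.2.2.2, if_neg (not_lt.2 h2.2.2.2.le)] at hf
      have p1 := Clan.mem_pairs.1 h1.1
      have p2 := Clan.mem_pairs.1 h2.1
      have p2' : γ.IsPair y.2 y'.2 := by rw [hf]; exact p2
      exact absurd (Clan.pair_chain p1 p2') id
    · rw [hBdef, Finset.mem_filter] at h1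
      rw [hAdef, Finset.mem_filter] at h2
      rw [if_neg (not_lt.2 h1.2.2.2.le), if_pos h2.2.2.2] at hf
      have p1 := Clan.mem_pairs.1 h1.1
      have p2 := Clan.mem_pairs.1 h2.1
      have p1' : γ.IsPair y'.2 y.2 := by rw [← hf]; exact p1
      exact absurd (Clan.pair_chain p2 p1') id
    · rw [hBdef, Finset.mem_filter] at h1 h2
      rw [if_neg (not_lt.2 h1.2.2.2.le), if_neg (not_lt.2 h2.2.2.2.le)] at hf
      have p1 := Clan.mem_pairs.1 h1.1
      have p2 := Clan.mem_pairs.1 h2.1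
      have p1' : γ.IsPair y'.1 y.2 := by rw [← hf]; exact p1
      exact Prod.ext hf (Clan.pair_left_unique p1' p2)
  have hABcard : A.card + B.card ≤ (j : ℕ) - i - 1 := by
    have h1 := Finset.card_le_card_of_injOn _ hmapsto hinj
    rw [Fin.card_Ioo] at h1
    rw [← Finset.card_union_of_disjoint hdisj]
    exact h1
  -- per-pair bound for pairs in B
  have hbound : ∀ y ∈ B,
      (γ.pairs.filter fun z => z.1 < y.1 ∧ y.1 < z.2 ∧ z.2 < y.2).card
        ≤ (y.2 : ℕ) - y.1 - 1 - 1 := by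
    intro y hy
    rw [hBdef, Finset.mem_filter] at hy
    obtain ⟨hyP, -, hyj1, hyj2⟩ := hy
    have hjmem : j ∈ Finset.Ioo y.1 y.2 := Finset.mem_Ioo.2 ⟨hyj1, hyj2⟩
    have hmt : ∀ z ∈ γ.pairs.filter fun z => z.1 < y.1 ∧ y.1 < z.2 ∧ z.2 < y.2,
        z.2 ∈ (Finset.Ioo y.1 y.2).erase j := by
      intro z hz
      rw [Finset.mem_filter] at hz
      refine Finset.mem_erase.2 ⟨?_, Finset.mem_Ioo.2 ⟨hz.2.2.1, hz.2.2.2⟩⟩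
      intro hzj
      obtain ⟨b, -, hb2⟩ := Clan.isPair_num (Clan.mem_pairs.1 hz.1)
      rw [hzj] at hb2
      rw [hb2] at hjSign
      exact Bool.noConfusion hjSign
    have hinj2 : Set.InjOn (fun z : Fin n × Fin n => z.2)
        ((γ.pairs.filter fun z => z.1 < y.1 ∧ y.1 < z.2 ∧ z.2 < y.2 :
          Finset (Fin n × Fin n)) : Set (Fin n × Fin n)) := by
      intro z hz z' hz' hzz
      simp only at hzz
      have p1 := Clan.mem_pairs.1 (Finset.mem_filter.1 (Finset.mem_coe.1 hz)).1
      have p2 := Clan.mem_pairs.1 (Finset.mem_filter.1 (Finset.mem_coe.1 hz')).1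
      have p1' : γ.IsPair z.1 z'.2 := by rw [← hzz]; exact p1
      exact Prod.ext (Clan.pair_right_unique p1' p2) hzz
    have h1 := Finset.card_le_card_of_injOn _ hmt hinj2
    rw [Finset.card_erase_of_mem hjmem, Fin.card_Ioo] at h1
    exact h1
  have hkey : ∀ y ∈ γ.pairs,
      γ'.summand y + (if y ∈ B then 1 else 0) = γ.summand y := by
    intro y hy
    have hylt : (y.1 : ℕ) < y.2 := Fin.lt_def.1 (Clan.mem_pairs.1 hy).1
    simp only [Clan.summand]
    rw [hP', Finset.filter_insert]
    by_cases hQ : i < y.1 ∧ y.1 < j ∧ j < y.2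
    · have hyB : y ∈ B := by rw [hBdef, Finset.mem_filter]; exact ⟨hy, hQ⟩
      rw [if_pos hQ, if_pos hyB,
        Finset.card_insert_of_notMem (fun h => hijnotmem (Finset.mem_filter.1 h).1)]
      have hb := hbound y hyB
      have h1 := Fin.lt_def.1 hQ.2.1
      have h2 := Fin.lt_def.1 hQ.2.2
      omega
    · have hyB : y ∉ B := by
        intro h
        rw [hBdef, Finset.mem_filter] at h
        exact hQ h.2
      rw [if_neg hQ, if_neg hyB]
      omega
  have hsum : (∑ y ∈ γ.pairs, γ'.summand y) + B.card = ∑ y ∈ γ.pairs, γ.summand y := by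
    have h0 : ∑ y ∈ γ.pairs, (γ'.summand y + (if y ∈ B then 1 else 0))
        = ∑ y ∈ γ.pairs, γ.summand y := Finset.sum_congr rfl hkey
    rw [Finset.sum_add_distrib, Finset.sum_ite_mem] at h0
    have hBsub : γ.pairs ∩ B = B :=
      Finset.inter_eq_right.2 (by rw [hBdef]; exact Finset.filter_subset _ _)
    rw [hBsub, Finset.sum_const, smul_eq_mul, mul_one] at h0
    exact h0
  have hijn : (i : ℕ) < j := Fin.lt_def.1 hij
  have hs0 : γ'.summand (i, j) + A.card = (j : ℕ) - i := by
    simp only [Clan.summand]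
    rw [hP', Finset.filter_insert]
    rw [if_neg (fun h => lt_irrefl i h.1)]
    rw [← hAdef]
    omega
  have hD' : γ'.D = Clan.dpq p q + (γ'.summand (i, j) + ∑ y ∈ γ.pairs, γ'.summand y) := by
    unfold Clan.D
    rw [hP', Finset.sum_insert hijnotmem]
  have hD : γ.D = Clan.dpq p q + ∑ y ∈ γ.pairs, γ.summand y := rfl
  constructor
  · omega
  · omega
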